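/- Let a_1,…,a_d be nonzero, pairwise distinct real numbers and v = (v_1,…,v_d) ∈ ℝ^d with all v_i ≠ 0. Then for any strictly increasing sequence of natural numbers i_1 < i_2 < … < i_d, the vectors v^{i_j} = ((a_1)^{i_j} v_1, …, (a_d)^{i_j} v_d), j = 1,…,d, span ℝ^d. -/

import Mathlib

/-!
Dividing the `j`-th coordinate by `v_j ≠ 0`, a linear relation `∑ cᵢ v^{eᵢ} = 0` says that the
lacunary polynomial `∑ cᵢ X^{eᵢ}`, which has at most `d` monomials, vanishes at the `d` distinct positive points `a_j`. By Descartes'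
rule of signs a nonzero polynomial with `k` monomials has at most `k - 1` sign changes in its
coefficients, hence fewer than `k` positive roots; so the polynomial, and with it every `cᵢ`,
is zero.
-/

open Finset

namespace Polynomial

theorem signVariations_lt_card_support {R : Type*} [Semiring R] [LinearOrder R] {P : R[X]}
    (hP : P ≠ 0) : P.signVariations < #P.support := by
  induction hn : #P.support using Nat.strong_induction_on generalizing P with
  | _ n ih =>
    by_cases hlead : P.eraseLead = 0
    · have hmono : P = monomial P.natDegree P.leadingCoeff := by
        simpa [hlead] using (eraseLead_add_monomial_natDegree_leadingCoeff P).symm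
      rw [hmono, signVariations_monomial, ← hn]
      exact card_pos.mpr (support_nonempty.mpr hP)
    · have hcard := card_support_eraseLead_add_one hP
      have hih := ih _ (by omega) hlead rfl
      have hstep := signVariations_le_eraseLead_succ P
      omega

theorem card_lt_card_support_of_forall_isRoot_pos {R : Type*} [CommRing R] [LinearOrder R]
    [IsStrictOrderedRing R] {P : R[X]} (hP : P ≠ 0) {s : Finset R}
    (hpos : ∀ x ∈ s, 0 < x) (hroot : ∀ x ∈ s, P.IsRoot x) : #s < #P.support :=
  calc #s ≤ #(P.roots.filter (0 < ·)).toFinset :=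
        card_le_card fun x hx => by simpa [hP, hpos x hx] using hroot x hx
    _ ≤ P.roots.countP (0 < ·) := by
        rw [Multiset.countP_eq_card_filter]
        exact Multiset.toFinset_card_le _
    _ ≤ P.signVariations := roots_countP_pos_le_signVariations P
    _ < #P.support := signVariations_lt_card_support hP

theorem card_support_sum_monomial_le {R ι : Type*} [Semiring R] (s : Finset ι) (e : ι → ℕ)
    (c : ι → R) : #(∑ i ∈ s, monomial (e i) (c i)).support ≤ #s := by
  classical
  calc #(∑ i ∈ s, monomial (e i) (c i)).support ≤ #(s.image e) := by
        refine card_le_card fun n hn => ?_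
        contrapose! hn
        simp_all [coeff_monomial]
    _ ≤ #s := card_image_le

theorem coeff_sum_monomial_of_injective {R ι : Type*} [Semiring R] [Fintype ι] {e : ι → ℕ}
    (he : Function.Injective e) (c : ι → R) (k : ι) :
    (∑ i, monomial (e i) (c i)).coeff (e k) = c k := by
  classical
  simp [finsetSum_coeff, coeff_monomial, he.eq_iff]

end Polynomial

open Polynomial in
theorem linearIndependent_pow_mul {K ι κ : Type*} [Field K] [LinearOrder K]
    [IsStrictOrderedRing K] [Fintype ι] [Fintype κ] {a v : κ → K} (ha0 : ∀ j, 0 < a j)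
    (ha : Function.Injective a) (hv : ∀ j, v j ≠ 0) {e : ι → ℕ} (he : Function.Injective e)
    (hcard : Fintype.card ι ≤ Fintype.card κ) :
    LinearIndependent K (fun i j => a j ^ e i * v j) := by
  classical
  rw [Fintype.linearIndependent_iff]
  intro c hc
  set p : K[X] := ∑ i, monomial (e i) (c i)
  have hroot : ∀ x ∈ univ.image a, p.IsRoot x := by
    simp only [mem_image, mem_univ, true_and, forall_exists_index, forall_apply_eq_imp_iff]
    intro j
    have hcj := congrFun hc j
    simp only [Finset.sum_apply, Pi.smul_apply, smul_eq_mul, Pi.zero_apply] at hcj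
    simp_rw [← mul_assoc, ← sum_mul] at hcj
    simpa [p, IsRoot, eval_finsetSum] using (mul_eq_zero.mp hcj).resolve_right (hv j)
  have hp : p = 0 := by
    by_contra hp
    have hlt : #(univ.image a) < #p.support :=
      card_lt_card_support_of_forall_isRoot_pos hp (by simpa using ha0) hroot
    have hle : #p.support ≤ #(univ : Finset ι) := card_support_sum_monomial_le univ e c
    rw [card_image_of_injective _ ha, card_univ] at hlt
    rw [card_univ] at hle
    omega
  intro i
  rw [← coeff_sum_monomial_of_injective he c i]
  simp [p, hp]

/-- For pairwise distinct positive reals `a₁,…,a_d` (nonzero, as in the paper;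
one may assume them positive) and a vector `v` with all coordinates nonzero, for any strictly
increasing sequence of exponents `i₁ < … < i_d`, the vectors
`v^{i_j} = ((a₁)^{i_j} v₁, …, (a_d)^{i_j} v_d)` span `ℝ^d`. -/
theorem vandermonde_arbitrary_powers_span (d : ℕ) (a v : Fin d → ℝ)
    (ha0 : ∀ j, 0 < a j) (ha : Function.Injective a) (hv : ∀ j, v j ≠ 0)
    (e : Fin d → ℕ) (he : StrictMono e) :
    Submodule.span ℝ
      (Set.range (fun i : Fin d => (fun j : Fin d => a j ^ (e i) * v j))) = ⊤ :=
  (linearIndependent_pow_mul ha0 ha hv he.injective le_rfl).span_eq_top_of_card_eq_finrank'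
    (by simp)
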